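/- arXiv:1501.07704 — 2 statements merged into one kernel-verified Lean document; each statement's English description precedes it below -/
import Mathlib

section
/- Let π₁ be a trajectory that stays at point s on [t_s, t̄] and then follows a continuous path p : [0,1] → ℝ² with p(0) = s. If every other trajectory π_j (j in a finite index set) is g_j-terminal with terminal time at most t̄, each π_j avoids the point s with clearance r₁ + r_j on [t_s, t̄], each g_j ≠ s, and the image of p avoids D(g_j, r₁ + r_j) for all j, then π₁ is collision-free with every π_j on [t_s, ∞) for radii r₁ and r_j. -/
abbrev Plane := EuclideanSpace ℝ (Fin 2)

theorem wait_then_follow_path_collisionFree_general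
    {ι : Type*}
    (π₁ : ℝ → Plane) (s : Plane) (ts tbar : ℝ)
    (p : ℝ → Plane)
    -- π₁ waits at s on [ts, tbar] and then follows the path p
    (hwait : ∀ t ∈ Set.Icc ts tbar, π₁ t = s)
    (hfollow : ∀ t : ℝ, tbar ≤ t → ∃ α ∈ Set.Icc (0:ℝ) 1, π₁ t = p α)
    (r₁ : ℝ) (r : ι → ℝ)
    (πj : ι → ℝ → Plane) (g : ι → Plane) (tg : ι → ℝ)
    -- each other trajectory is g_j-terminal with terminal time at most tbar
    (htg : ∀ j, tg j ≤ tbar)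
    (hterm : ∀ j, ∀ t : ℝ, tg j ≤ t → πj j t = g j)
    -- each π_j avoids the point s with clearance r₁ + r_j on [ts, tbar]
    (havoid : ∀ j, ∀ t ∈ Set.Icc ts tbar, r₁ + r j ≤ dist (πj j t) s)
    -- the image of p avoids D(g_j, r₁ + r_j) for all j
    (hpath : ∀ j, ∀ α ∈ Set.Icc (0:ℝ) 1, p α ∉ Metric.closedBall (g j) (r₁ + r j)) :
    ∀ j, ∀ t : ℝ, ts ≤ t → r₁ + r j ≤ dist (π₁ t) (πj j t) := by
  intro j t hts_t
  rcases le_or_gt t tbar with hwaiting | hmoving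
  · rw [hwait t ⟨hts_t, hwaiting⟩, dist_comm]
    exact havoid j t ⟨hts_t, hwaiting⟩
  · obtain ⟨α, hα, hπ₁⟩ := hfollow t hmoving.le
    rw [hπ₁, hterm j t ((htg j).trans hmoving.le)]
    have hfar := hpath j α hα
    rw [Metric.mem_closedBall, not_le] at hfar
    exact hfar.le

theorem wait_then_follow_path_collisionFree
    {ι : Type*} [Fintype ι]
    (π₁ : ℝ → Plane) (s : Plane) (ts tbar : ℝ) (hts : ts ≤ tbar)
    (p : ℝ → Plane) (hp : Continuous p) (hp0 : p 0 = s)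
    -- π₁ waits at s on [ts, tbar] and then follows the path p
    (hwait : ∀ t ∈ Set.Icc ts tbar, π₁ t = s)
    (hfollow : ∀ t : ℝ, tbar ≤ t → ∃ α ∈ Set.Icc (0:ℝ) 1, π₁ t = p α)
    (r₁ : ℝ) (r : ι → ℝ)
    (πj : ι → ℝ → Plane) (g : ι → Plane) (tg : ι → ℝ)
    -- each other trajectory is g_j-terminal with terminal time at most tbar
    (htg : ∀ j, tg j ≤ tbar)
    (hterm : ∀ j, ∀ t : ℝ, tg j ≤ t → πj j t = g j)
    -- each π_j avoids the point s with clearance r₁ + r_j on [ts, tbar]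
    (havoid : ∀ j, ∀ t ∈ Set.Icc ts tbar, r₁ + r j ≤ dist (πj j t) s)
    (hgs : ∀ j, g j ≠ s)
    -- the image of p avoids D(g_j, r₁ + r_j) for all j
    (hpath : ∀ j, ∀ α ∈ Set.Icc (0:ℝ) 1, p α ∉ Metric.closedBall (g j) (r₁ + r j)) :
    ∀ j, ∀ t : ℝ, ts ≤ t → r₁ + r j ≤ dist (π₁ t) (πj j t) :=
  wait_then_follow_path_collisionFree_general π₁ s ts tbar p hwait hfollow r₁ r πj g tg htg hterm
    havoid hpath
end

section
/- Abstract single-step version of the token-time bound: let Φ be a finite multiset of real numbers (finish times), let τ be a time, let A = {f ∈ Φ : f ≥ τ}, and suppose max(A ∪ {τ}) ≤ τ + |A|·r for r > 0. If f₀ ∈ Φ satisfies f₀ < τ, and we set Φ' = Φ \ {f₀} ∪ {f*} where τ ≤ f* ≤ max(A ∪ {τ}) + r, then A' = {f ∈ Φ' : f ≥ τ} satisfies max(A' ∪ {τ}) ≤ τ + |A'|·r. -/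
theorem Multiset.filter_erase_of_not {α : Type*} [DecidableEq α] (p : α → Prop) [DecidablePred p]
    (s : Multiset α) {a : α} (ha : ¬p a) : (s.erase a).filter p = s.filter p := by
  rw [← sub_singleton, filter_sub, filter_singleton, if_neg ha, empty_eq_zero, Multiset.sub_zero]

theorem Multiset.fold_max_cons_le_add_card_mul {α : Type*} [Semiring α] [LinearOrder α]
    [IsOrderedRing α] {s : Multiset α} {τ r a : α} (hr : 0 ≤ r)
    (hs : s.fold max τ ≤ τ + s.card * r) (ha : a ≤ s.fold max τ + r) :
    (a ::ₘ s).fold max τ ≤ τ + (a ::ₘ s).card * r := by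
  rw [fold_cons_left, card_cons, Nat.cast_succ, add_one_mul, ← add_assoc]
  exact max_le (ha.trans (by gcongr)) (hs.trans (le_add_of_nonneg_right hr))

theorem token_single_step_bound_general
    (Φ : Multiset ℝ) (τ r f₀ fstar : ℝ) (hr : 0 < r)
    (hA : (Φ.filter (fun x => τ ≤ x)).fold max τ ≤ τ + (Φ.filter (fun x => τ ≤ x)).card * r)
    (hf₀τ : f₀ < τ)
    (hfs₁ : τ ≤ fstar)
    (hfs₂ : fstar ≤ (Φ.filter (fun x => τ ≤ x)).fold max τ + r) :
    ((fstar ::ₘ Φ.erase f₀).filter (fun x => τ ≤ x)).fold max τ ≤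
      τ + ((fstar ::ₘ Φ.erase f₀).filter (fun x => τ ≤ x)).card * r := by
  rw [Multiset.filter_cons_of_pos _ hfs₁, Multiset.filter_erase_of_not _ _ hf₀τ.not_ge]
  exact Multiset.fold_max_cons_le_add_card_mul hr.le hA hfs₂

theorem token_single_step_bound
    (Φ : Multiset ℝ) (τ r f₀ fstar : ℝ) (hr : 0 < r)
    (hΦ : ∀ x ∈ Φ, (0:ℝ) ≤ x)
    (hA : (Φ.filter (fun x => τ ≤ x)).fold max τ ≤ τ + (Φ.filter (fun x => τ ≤ x)).card * r)
    (hf₀ : f₀ ∈ Φ) (hf₀τ : f₀ < τ)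
    (hfs₁ : τ ≤ fstar)
    (hfs₂ : fstar ≤ (Φ.filter (fun x => τ ≤ x)).fold max τ + r) :
    ((fstar ::ₘ Φ.erase f₀).filter (fun x => τ ≤ x)).fold max τ ≤
      τ + ((fstar ::ₘ Φ.erase f₀).filter (fun x => τ ≤ x)).card * r :=
  token_single_step_bound_general Φ τ r f₀ fstar hr hA hf₀τ hfs₁ hfs₂
end
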